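/- Let Φ be a real n×m matrix whose columns φ_1,…,φ_m each have unit Euclidean norm, let x ∈ ℝ^m have support S, let ε ∈ ℝⁿ, and let y = Φx + ε. Let A ⊆ {1,…,m} satisfy S ⊊ A, and suppose the submatrix Φ_A of columns indexed by A has full column rank. If (σ_min(Φ_A) / √(2(2 − σ_min(Φ_A)²))) · min_{i∈S} |x_i| > ‖ε‖₂, then min_{i ∈ A∖S} ‖r_{A∖{i}}‖₂ < min_{i ∈ S} ‖r_{A∖{i}}‖₂; in particular every minimizer of ‖r_{A∖{i}}‖₂ over i ∈ A lies in A∖S, so Backward Regression at active set A deletes only irrelevant features. -/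

import Mathlib

/-- The least-squares residual `r_A = y − P_A y`, where `P_A` is the orthogonal projection
onto `span{φ_j : j ∈ A}`. -/
noncomputable def lsResidual {n m : ℕ} (φ : Fin m → EuclideanSpace ℝ (Fin n))
    (y : EuclideanSpace ℝ (Fin n)) (A : Finset (Fin m)) : EuclideanSpace ℝ (Fin n) :=
  y - (Submodule.orthogonalProjectionOnto (Submodule.span ℝ (φ '' (A : Set (Fin m)))) y :
    EuclideanSpace ℝ (Fin n))

/-- The smallest singular value of the matrix with columns `φ j`,
`σ_min = inf {‖Σ_j v_j φ_j‖ : ‖v‖₂ = 1}`. -/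
noncomputable def sigmaMin {n : ℕ} {ι : Type*} [Fintype ι]
    (φ : ι → EuclideanSpace ℝ (Fin n)) : ℝ :=
  sInf {t : ℝ | ∃ v : EuclideanSpace ℝ ι, ‖v‖ = 1 ∧ t = ‖∑ j, v j • φ j‖}

/-!
Write `q_k` for the part of `φ_k` orthogonal to the other columns of `A`, and `u_k = q_k / ‖q_k‖`.
Removing `k` from `A` increases the squared residual by exactly `⟪y, u_k⟫²`, and since `x` is
supported in `A`, `⟪y, u_k⟫ = x_k ‖q_k‖ + ⟪ε, u_k⟫`. Hence an irrelevant `i` is preferred to a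
relevant `j` as soon as `|⟪ε, u_i⟫| + |⟪ε, u_j⟫| < |x_j| ‖q_j‖`. By Cauchy–Schwarz the left side is
at most `‖ε‖ √(2 (1 + |⟪u_i, u_j⟫|))`. On the other hand the coefficient of `φ_k` in a vector `v` of
the span is `⟪u_k, v⟫ / ‖q_k‖`, so the singular-value bound applied to `u_i ± u_j` controls the
coherence: `σ² (1 + |⟪u_i, u_j⟫|) (‖q_i‖⁻² + ‖q_j‖⁻²) ≤ 2`. With `σ ≤ ‖q_k‖ ≤ 1` this is enough
under the threshold `σ / √(2 (2 - σ²))`.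
-/

open scoped RealInnerProductSpace

namespace Submodule

variable {E : Type*} [NormedAddCommGroup E] [InnerProductSpace ℝ E]

theorem norm_sub_starProjection_sq_of_eq_sup_span_singleton {K L : Submodule ℝ E}
    [K.HasOrthogonalProjection] [L.HasOrthogonalProjection] {q : E} (hq : q ∈ Kᗮ)
    (hL : L = K ⊔ ℝ ∙ q) (y : E) :
    ‖y - K.starProjection y‖ ^ 2 = ‖y - L.starProjection y‖ ^ 2 + (⟪y, q⟫ / ‖q‖) ^ 2 := by
  set r := y - L.starProjection y
  set z := L.starProjection y - K.starProjection y
  have hKL : K ≤ L := hL ▸ le_sup_left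
  have hr : r ∈ Lᗮ := sub_starProjection_mem_orthogonal y
  have hzL : z ∈ L := sub_mem (starProjection_apply_mem L y) (hKL (starProjection_apply_mem K y))
  have hzK : z ∈ Kᗮ := by
    have : z = (y - K.starProjection y) - r := by simp only [r, z]; abel
    rw [this]
    exact sub_mem (sub_starProjection_mem_orthogonal y) (orthogonal_le hKL hr)
  -- `z` lies in `L ⊓ Kᗮ`, which is the line through `q`
  obtain ⟨c, hzc⟩ : ∃ c : ℝ, z = c • q := by
    obtain ⟨w, hw, t, ht, hwt⟩ := mem_sup.1 (hL ▸ hzL)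
    obtain ⟨c, rfl⟩ := mem_span_singleton.1 ht
    have hw' : w ∈ Kᗮ := by
      rw [← add_sub_cancel_right w (c • q), hwt]
      exact sub_mem hzK (smul_mem _ c hq)
    refine ⟨c, ?_⟩
    rw [← hwt, inner_self_eq_zero.1 (hw' w hw), zero_add]
  have hyq : ⟪y, q⟫ = c * ‖q‖ ^ 2 := by
    have hsplit : y = r + z + K.starProjection y := by simp only [r, z]; abel
    rw [hsplit, inner_add_left, inner_add_left, hzc, real_inner_smul_left,
      real_inner_self_eq_norm_sq, (mem_orthogonal' L r).1 hr q (hL ▸ mem_sup_right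
        (mem_span_singleton_self q)),
      hq _ (starProjection_apply_mem K y)]
    ring
  have hrz : ⟪r, z⟫ = 0 := (mem_orthogonal' L r).1 hr z hzL
  calc ‖y - K.starProjection y‖ ^ 2 = ‖r + z‖ ^ 2 := by simp only [r, z]; congr 2; abel
    _ = ‖r‖ ^ 2 + ‖z‖ ^ 2 := by rw [norm_add_sq_real, hrz]; ring
    _ = ‖r‖ ^ 2 + (⟪y, q⟫ / ‖q‖) ^ 2 := by
      rcases eq_or_ne ‖q‖ 0 with h0 | h0
      · simp [hzc, norm_eq_zero.1 h0]
      · rw [hyq, hzc, norm_smul, Real.norm_eq_abs]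
        field_simp
        rw [sq_abs]
        ring

end Submodule

theorem sq_abs_inner_add_abs_inner_le {E : Type*} [NormedAddCommGroup E] [InnerProductSpace ℝ E]
    {u w : E} (hu : ‖u‖ = 1) (hw : ‖w‖ = 1) (e : E) :
    (|⟪e, u⟫| + |⟪e, w⟫|) ^ 2 ≤ ‖e‖ ^ 2 * (2 * (1 + |⟪u, w⟫|)) := by
  have key : ∀ s : ℝ, |s| = 1 →
      (⟪e, u⟫ + s * ⟪e, w⟫) ^ 2 ≤ ‖e‖ ^ 2 * (2 * (1 + |⟪u, w⟫|)) := by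
    intro s hs
    have hnorm : ‖u + s • w‖ ^ 2 ≤ 2 * (1 + |⟪u, w⟫|) := by
      have : s * ⟪u, w⟫ ≤ |⟪u, w⟫| := by
        simpa [abs_mul, hs] using le_abs_self (s * ⟪u, w⟫)
      rw [norm_add_sq_real, norm_smul, real_inner_smul_right, mul_pow, hu, hw,
        Real.norm_eq_abs, hs]
      linarith
    calc (⟪e, u⟫ + s * ⟪e, w⟫) ^ 2 = |⟪e, u + s • w⟫| ^ 2 := by
          rw [sq_abs, inner_add_right, real_inner_smul_right]
      _ ≤ (‖e‖ * ‖u + s • w‖) ^ 2 := by gcongr; exact abs_real_inner_le_norm _ _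
      _ ≤ ‖e‖ ^ 2 * (2 * (1 + |⟪u, w⟫|)) := by rw [mul_pow]; gcongr
  have hsq : (|⟪e, u⟫| + |⟪e, w⟫|) ^ 2 = ⟪e, u⟫ ^ 2 + ⟪e, w⟫ ^ 2 + 2 * |⟪e, u⟫ * ⟪e, w⟫| := by
    rw [abs_mul, add_sq, sq_abs, sq_abs]; ring
  rcases le_total 0 (⟪e, u⟫ * ⟪e, w⟫) with h | h
  · calc _ = (⟪e, u⟫ + 1 * ⟪e, w⟫) ^ 2 := by rw [hsq, abs_of_nonneg h]; ring
      _ ≤ _ := key 1 abs_one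
  · calc _ = (⟪e, u⟫ + -1 * ⟪e, w⟫) ^ 2 := by rw [hsq, abs_of_nonpos h]; ring
      _ ≤ _ := key (-1) (by simp)

theorem pos_and_sq_mul_lt_of_lt_div_sqrt {σ X e : ℝ} (hX : 0 < X) (he : 0 ≤ e)
    (h : σ / Real.sqrt (2 * (2 - σ ^ 2)) * X > e) :
    0 < σ ∧ e ^ 2 * (2 * (2 - σ ^ 2)) < σ ^ 2 * X ^ 2 := by
  have hpos : 0 < σ / Real.sqrt (2 * (2 - σ ^ 2)) :=
    (pos_iff_pos_of_mul_pos (he.trans_lt h)).2 hX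
  obtain ⟨hσ, hsqrt⟩ := (div_pos_iff.1 hpos).resolve_right
    fun ⟨_, hneg⟩ => (Real.sqrt_nonneg _).not_gt hneg
  have hQ := Real.sqrt_pos.1 hsqrt
  refine ⟨hσ, ?_⟩
  have hsq := pow_lt_pow_left₀ h he two_ne_zero
  rw [mul_pow, div_pow, Real.sq_sqrt hQ.le, div_mul_eq_mul_div] at hsq
  exact (lt_div_iff₀ hQ).1 hsq

theorem abs_add_abs_lt_of_coherence_le {σ Di Dj t a b e x : ℝ} (hσ : 0 < σ) (hσDj : σ ≤ Dj)
    (hDj : Dj ≤ 1) (hDi : 0 < Di) (hDi1 : Di ≤ 1)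
    (hcoh : σ ^ 2 * t * ((Di ^ 2)⁻¹ + (Dj ^ 2)⁻¹) ≤ 2) (hab : (|a| + |b|) ^ 2 ≤ e ^ 2 * (2 * t))
    (hnoise : e ^ 2 * (2 * (2 - σ ^ 2)) < σ ^ 2 * x ^ 2) :
    |a| + |b| < |x| * Dj := by
  set P := (Di ^ 2)⁻¹ + (Dj ^ 2)⁻¹
  have hDj0 : 0 < Dj := hσ.trans_le hσDj
  have hDjP : Dj ^ 2 * P = Dj ^ 2 / Di ^ 2 + 1 := by simp only [P]; field_simp
  have hratio : Dj ^ 2 ≤ Dj ^ 2 / Di ^ 2 :=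
    le_div_self (sq_nonneg _) (by positivity) (pow_le_one₀ hDi.le hDi1)
  have hσ1 : σ ^ 2 ≤ 1 := pow_le_one₀ hσ.le (hσDj.trans hDj)
  have hσDj2 : σ ^ 2 ≤ Dj ^ 2 := pow_le_pow_left₀ hσ.le hσDj 2
  -- this is where the threshold `σ / √(2(2 - σ²))` comes from
  have hmargin : 2 ≤ (2 - σ ^ 2) * (Dj ^ 2 * P) := by
    rw [hDjP]; nlinarith
  have hkey : σ ^ 2 * P * (|a| + |b|) ^ 2 < σ ^ 2 * P * (|x| * Dj) ^ 2 :=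
    calc σ ^ 2 * P * (|a| + |b|) ^ 2 ≤ σ ^ 2 * P * (e ^ 2 * (2 * t)) := by gcongr
      _ = 2 * e ^ 2 * (σ ^ 2 * t * P) := by ring
      _ ≤ 2 * e ^ 2 * 2 := by gcongr
      _ ≤ e ^ 2 * (2 * (2 - σ ^ 2)) * (Dj ^ 2 * P) := by nlinarith [sq_nonneg e]
      _ < σ ^ 2 * x ^ 2 * (Dj ^ 2 * P) := by gcongr
      _ = σ ^ 2 * P * (|x| * Dj) ^ 2 := by rw [mul_pow, sq_abs]; ring
  have hab' := lt_of_mul_lt_mul_left hkey (by positivity)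
  exact (pow_lt_pow_iff_left₀ (by positivity) (by positivity) two_ne_zero).1 hab'

theorem sigmaMin_nonneg {n : ℕ} {ι : Type*} [Fintype ι] (φ : ι → EuclideanSpace ℝ (Fin n)) :
    0 ≤ sigmaMin φ :=
  Real.sInf_nonneg fun _ ⟨_, _, ht⟩ => ht ▸ norm_nonneg _

theorem sigmaMin_mul_norm_le {n : ℕ} {ι : Type*} [Fintype ι] (φ : ι → EuclideanSpace ℝ (Fin n))
    (v : EuclideanSpace ℝ ι) : sigmaMin φ * ‖v‖ ≤ ‖∑ j, v j • φ j‖ := by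
  rcases eq_or_ne v 0 with rfl | hv
  · simp
  have hv : 0 < ‖v‖ := norm_pos_iff.2 hv
  have hle : sigmaMin φ ≤ ‖∑ j, (‖v‖⁻¹ • v) j • φ j‖ := by
    refine csInf_le ⟨0, fun _ ⟨_, _, ht⟩ => ht ▸ norm_nonneg _⟩ ⟨‖v‖⁻¹ • v, ?_, rfl⟩
    rw [norm_smul, norm_inv, norm_norm, inv_mul_cancel₀ hv.ne']
  simp only [PiLp.smul_apply, smul_eq_mul, mul_smul, ← Finset.smul_sum, norm_smul, norm_inv,
    norm_norm] at hle
  rw [mul_comm]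
  exact (le_inv_mul_iff₀ hv).1 hle

theorem sigmaMin_sq_mul_sum_sq_le {n m : ℕ} (φ : Fin m → EuclideanSpace ℝ (Fin n))
    (A : Finset (Fin m)) (c : Fin m → ℝ) :
    sigmaMin (fun i : {i // i ∈ A} => φ i.val) ^ 2 * ∑ l ∈ A, c l ^ 2
      ≤ ‖∑ l ∈ A, c l • φ l‖ ^ 2 := by
  let v : EuclideanSpace ℝ {i // i ∈ A} := WithLp.toLp 2 fun j => c j.val
  have hv : ‖v‖ ^ 2 = ∑ l ∈ A, c l ^ 2 := by
    rw [EuclideanSpace.norm_sq_eq, ← Finset.sum_coe_sort A]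
    simp [v]
  have h := sigmaMin_mul_norm_le (fun i : {i // i ∈ A} => φ i.val) v
  rw [← Finset.sum_coe_sort A (fun l => c l • φ l), ← hv, ← mul_pow]
  exact pow_le_pow_left₀ (mul_nonneg (sigmaMin_nonneg _) (norm_nonneg _)) h 2

section ColumnResidual

variable {n m : ℕ} (φ : Fin m → EuclideanSpace ℝ (Fin n)) (A : Finset (Fin m))

theorem lsResidual_eq (y : EuclideanSpace ℝ (Fin n)) :
    lsResidual φ y A = y - (Submodule.span ℝ (φ '' A)).starProjection y := by
  rw [Submodule.starProjection_apply]
  rfl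

theorem lsResidual_mem_orthogonal (y : EuclideanSpace ℝ (Fin n)) :
    lsResidual φ y A ∈ (Submodule.span ℝ (φ '' A))ᗮ := by
  rw [lsResidual_eq]
  exact Submodule.sub_starProjection_mem_orthogonal y

theorem norm_lsResidual_le (y : EuclideanSpace ℝ (Fin n)) : ‖lsResidual φ y A‖ ≤ ‖y‖ := by
  rw [lsResidual_eq, ← Submodule.starProjection_orthogonal_val]
  exact Submodule.norm_starProjection_apply_le _ y

noncomputable def columnResidual (k : Fin m) : EuclideanSpace ℝ (Fin n) :=
  lsResidual φ (φ k) (A.erase k)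

noncomputable def columnDirection (k : Fin m) : EuclideanSpace ℝ (Fin n) :=
  ‖columnResidual φ A k‖⁻¹ • columnResidual φ A k

variable {φ A}

theorem norm_columnResidual_le (k : Fin m) : ‖columnResidual φ A k‖ ≤ ‖φ k‖ :=
  norm_lsResidual_le φ _ _

theorem norm_columnDirection {k : Fin m} (hk : columnResidual φ A k ≠ 0) :
    ‖columnDirection φ A k‖ = 1 := by
  rw [columnDirection, norm_smul, norm_inv, norm_norm, inv_mul_cancel₀ (norm_ne_zero_iff.2 hk)]

theorem columnResidual_mem_orthogonal (k : Fin m) :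
    columnResidual φ A k ∈ (Submodule.span ℝ (φ '' (A.erase k : Set (Fin m))))ᗮ :=
  lsResidual_mem_orthogonal φ _ _

theorem inner_columnResidual_of_mem_erase {k l : Fin m} (hl : l ∈ A.erase k) :
    ⟪columnResidual φ A k, φ l⟫ = 0 := by
  rw [real_inner_comm]
  exact columnResidual_mem_orthogonal k _ (Submodule.subset_span ⟨l, hl, rfl⟩)

theorem inner_columnResidual_self (k : Fin m) :
    ⟪columnResidual φ A k, φ k⟫ = ‖columnResidual φ A k‖ ^ 2 := by
  set K := Submodule.span ℝ (φ '' (A.erase k : Set (Fin m)))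
  have hφ : φ k = columnResidual φ A k + K.starProjection (φ k) := by
    rw [columnResidual, lsResidual_eq, sub_add_cancel]
  conv_lhs => rw [hφ]
  rw [inner_add_right, real_inner_self_eq_norm_sq, real_inner_comm,
    columnResidual_mem_orthogonal k _ (K.starProjection_apply_mem _), add_zero]

theorem inner_columnResidual_sum {k : Fin m} (hk : k ∈ A) (c : Fin m → ℝ) :
    ⟪columnResidual φ A k, ∑ l ∈ A, c l • φ l⟫ = c k * ‖columnResidual φ A k‖ ^ 2 := by
  rw [inner_sum, Finset.sum_eq_single_of_mem k hk, real_inner_smul_right,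
    inner_columnResidual_self]
  intro l hl hlk
  rw [real_inner_smul_right, inner_columnResidual_of_mem_erase (Finset.mem_erase.2 ⟨hlk, hl⟩),
    mul_zero]

theorem inner_columnDirection_sum {k : Fin m} (hk : k ∈ A) (c : Fin m → ℝ) :
    ⟪columnDirection φ A k, ∑ l ∈ A, c l • φ l⟫ = c k * ‖columnResidual φ A k‖ := by
  rw [columnDirection, real_inner_smul_left, inner_columnResidual_sum hk]
  rcases eq_or_ne ‖columnResidual φ A k‖ 0 with h | h
  · simp [h]
  · field_simp

theorem span_image_eq_sup_columnResidual {k : Fin m} (hk : k ∈ A) :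
    Submodule.span ℝ (φ '' A) =
      Submodule.span ℝ (φ '' (A.erase k : Set (Fin m))) ⊔ ℝ ∙ columnResidual φ A k := by
  set K := Submodule.span ℝ (φ '' (A.erase k : Set (Fin m)))
  have hφ : φ k = K.starProjection (φ k) + columnResidual φ A k := by
    rw [columnResidual, lsResidual_eq, add_sub_cancel]
  conv_lhs => rw [← Finset.insert_erase hk, Finset.coe_insert, Set.image_insert_eq,
    Submodule.span_insert]
  refine le_antisymm (sup_le ?_ le_sup_left) (sup_le le_sup_right ?_)
  · rw [Submodule.span_singleton_le_iff_mem, hφ]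
    exact add_mem (Submodule.mem_sup_left (K.starProjection_apply_mem _))
      (Submodule.mem_sup_right (Submodule.mem_span_singleton_self _))
  · rw [Submodule.span_singleton_le_iff_mem, columnResidual, lsResidual_eq]
    exact sub_mem (Submodule.mem_sup_left (Submodule.mem_span_singleton_self _))
      (Submodule.mem_sup_right (K.starProjection_apply_mem _))

theorem columnDirection_mem_span {k : Fin m} (hk : k ∈ A) :
    columnDirection φ A k ∈ Submodule.span ℝ (φ '' A) := by
  rw [span_image_eq_sup_columnResidual hk]
  exact Submodule.smul_mem _ _ (Submodule.mem_sup_right (Submodule.mem_span_singleton_self _))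

theorem sq_norm_lsResidual_erase {k : Fin m} (hk : k ∈ A) (y : EuclideanSpace ℝ (Fin n)) :
    ‖lsResidual φ y (A.erase k)‖ ^ 2 = ‖lsResidual φ y A‖ ^ 2 + ⟪y, columnDirection φ A k⟫ ^ 2 := by
  rw [lsResidual_eq, lsResidual_eq, columnDirection, real_inner_smul_right, inv_mul_eq_div]
  exact Submodule.norm_sub_starProjection_sq_of_eq_sup_span_singleton
    (columnResidual_mem_orthogonal k) (span_image_eq_sup_columnResidual hk) y

theorem exists_columnResidual_eq_sum {k : Fin m} (hk : k ∈ A) :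
    ∃ c : Fin m → ℝ, c k = 1 ∧ columnResidual φ A k = ∑ l ∈ A, c l • φ l := by
  obtain ⟨w, hw⟩ := (Submodule.mem_span_image_finset_iff_exists_fun' ℝ).1
    ((Submodule.span ℝ (φ '' (A.erase k : Set (Fin m)))).starProjection_apply_mem (φ k))
  refine ⟨Function.update (-w) k 1, by simp, ?_⟩
  rw [← Finset.add_sum_erase A _ hk, Function.update_self, one_smul, columnResidual,
    lsResidual_eq, ← hw, sub_eq_add_neg, ← Finset.sum_neg_distrib]
  congr 1
  refine Finset.sum_congr rfl fun l hl => ?_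
  rw [Function.update_of_ne (Finset.ne_of_mem_erase hl), Pi.neg_apply, neg_smul]

theorem sigmaMin_le_norm_columnResidual {k : Fin m} (hk : k ∈ A) :
    sigmaMin (fun i : {i // i ∈ A} => φ i.val) ≤ ‖columnResidual φ A k‖ := by
  obtain ⟨c, hck, hc⟩ := exists_columnResidual_eq_sum (φ := φ) hk
  have hc1 : 1 ≤ ∑ l ∈ A, c l ^ 2 := by
    calc (1 : ℝ) = c k ^ 2 := by rw [hck, one_pow]
      _ ≤ ∑ l ∈ A, c l ^ 2 := Finset.single_le_sum (fun l _ => sq_nonneg (c l)) hk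
  have h := sigmaMin_sq_mul_sum_sq_le φ A c
  rw [← hc] at h
  refine (pow_le_pow_iff_left₀ (sigmaMin_nonneg _) (norm_nonneg _) two_ne_zero).1 ?_
  nlinarith [sq_nonneg (sigmaMin (fun i : {i // i ∈ A} => φ i.val))]

theorem sigmaMin_sq_mul_coherence_le {i j : Fin m} (hi : i ∈ A) (hj : j ∈ A) (hij : i ≠ j)
    (hqi : columnResidual φ A i ≠ 0) (hqj : columnResidual φ A j ≠ 0) :
    sigmaMin (fun l : {l // l ∈ A} => φ l.val) ^ 2 *
        (1 + |⟪columnDirection φ A i, columnDirection φ A j⟫|) *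
        ((‖columnResidual φ A i‖ ^ 2)⁻¹ + (‖columnResidual φ A j‖ ^ 2)⁻¹) ≤ 2 := by
  set σ := sigmaMin (fun l : {l // l ∈ A} => φ l.val)
  set ui := columnDirection φ A i
  set uj := columnDirection φ A j
  set Di := ‖columnResidual φ A i‖
  set Dj := ‖columnResidual φ A j‖
  set ρ := ⟪ui, uj⟫
  have hDi : 0 < Di := norm_pos_iff.2 hqi
  have hDj : 0 < Dj := norm_pos_iff.2 hqj
  -- test the singular-value bound on `ui ± uj`, with the sign making the two directions add up
  obtain ⟨s, hs, hsρ⟩ : ∃ s : ℝ, s ^ 2 = 1 ∧ s * ρ = |ρ| := by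
    rcases le_total 0 ρ with h | h
    · exact ⟨1, by norm_num, by rw [one_mul, abs_of_nonneg h]⟩
    · exact ⟨-1, by norm_num, by rw [abs_of_nonpos h]; ring⟩
  obtain ⟨c, hc⟩ := (Submodule.mem_span_image_finset_iff_exists_fun' ℝ).1
    (add_mem (columnDirection_mem_span hi) (Submodule.smul_mem _ s (columnDirection_mem_span hj)))
  have hci : c i * Di = 1 + |ρ| := by
    rw [← inner_columnDirection_sum hi, hc, inner_add_right, real_inner_smul_right,
      real_inner_self_eq_norm_sq, norm_columnDirection hqi, ← hsρ]
    ring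
  have hcj : c j * Dj = s * (1 + |ρ|) := by
    rw [← inner_columnDirection_sum hj, hc, inner_add_right, real_inner_smul_right,
      real_inner_self_eq_norm_sq, norm_columnDirection hqj, real_inner_comm, ← hsρ]
    linear_combination (-ρ) * hs
  have hv : ‖ui + s • uj‖ ^ 2 = 2 * (1 + |ρ|) := by
    rw [norm_add_sq_real, norm_smul, real_inner_smul_right, mul_pow, norm_columnDirection hqi,
      norm_columnDirection hqj, Real.norm_eq_abs, sq_abs, hs, ← hsρ]
    ring
  have hpair : c i ^ 2 + c j ^ 2 ≤ ∑ l ∈ A, c l ^ 2 := by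
    rw [← Finset.sum_pair (f := fun l => c l ^ 2) hij]
    exact Finset.sum_le_sum_of_subset_of_nonneg (Finset.insert_subset hi
      (Finset.singleton_subset_iff.2 hj)) fun _ _ _ => sq_nonneg _
  have hbound := sigmaMin_sq_mul_sum_sq_le φ A c
  rw [hc, hv] at hbound
  have hcoef : c i ^ 2 + c j ^ 2 = (1 + |ρ|) ^ 2 * ((Di ^ 2)⁻¹ + (Dj ^ 2)⁻¹) := by
    rw [eq_div_of_mul_eq hDi.ne' hci, eq_div_of_mul_eq hDj.ne' hcj]
    field_simp
    linear_combination Di ^ 2 * hs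
  have ht : 0 < 1 + |ρ| := by positivity
  refine le_of_mul_le_mul_right ?_ ht
  calc σ ^ 2 * (1 + |ρ|) * ((Di ^ 2)⁻¹ + (Dj ^ 2)⁻¹) * (1 + |ρ|)
      = σ ^ 2 * (c i ^ 2 + c j ^ 2) := by rw [hcoef]; ring
    _ ≤ σ ^ 2 * ∑ l ∈ A, c l ^ 2 := by gcongr
    _ ≤ 2 * (1 + |ρ|) := hbound

theorem inner_columnDirection_of_support_subset {x : Fin m → ℝ} (hxA : ∀ l ∉ A, x l = 0)
    {k : Fin m} (hk : k ∈ A) (ε : EuclideanSpace ℝ (Fin n)) :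
    ⟪(∑ l, x l • φ l) + ε, columnDirection φ A k⟫ =
      x k * ‖columnResidual φ A k‖ + ⟪ε, columnDirection φ A k⟫ := by
  rw [inner_add_left, ← Finset.sum_subset (Finset.subset_univ A)
    fun l _ hl => by rw [hxA l hl, zero_smul], real_inner_comm, inner_columnDirection_sum hk]

theorem norm_lsResidual_erase_lt {x : Fin m → ℝ} (hxA : ∀ l ∉ A, x l = 0)
    {ε : EuclideanSpace ℝ (Fin n)} {i j : Fin m} (hi : i ∈ A) (hj : j ∈ A) (hij : i ≠ j)
    (hxi : x i = 0) (hφi : ‖φ i‖ ≤ 1) (hφj : ‖φ j‖ ≤ 1)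
    (hσ : 0 < sigmaMin (fun l : {l // l ∈ A} => φ l.val))
    (hnoise : ‖ε‖ ^ 2 * (2 * (2 - sigmaMin (fun l : {l // l ∈ A} => φ l.val) ^ 2)) <
      sigmaMin (fun l : {l // l ∈ A} => φ l.val) ^ 2 * x j ^ 2) :
    ‖lsResidual φ ((∑ l, x l • φ l) + ε) (A.erase i)‖ <
      ‖lsResidual φ ((∑ l, x l • φ l) + ε) (A.erase j)‖ := by
  have hσi := sigmaMin_le_norm_columnResidual (φ := φ) hi
  have hσj := sigmaMin_le_norm_columnResidual (φ := φ) hj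
  have hqi : columnResidual φ A i ≠ 0 := norm_pos_iff.1 (hσ.trans_le hσi)
  have hqj : columnResidual φ A j ≠ 0 := norm_pos_iff.1 (hσ.trans_le hσj)
  have hnoise_lt : |⟪ε, columnDirection φ A i⟫| + |⟪ε, columnDirection φ A j⟫| <
      |x j| * ‖columnResidual φ A j‖ :=
    abs_add_abs_lt_of_coherence_le hσ hσj ((norm_columnResidual_le j).trans hφj)
      (hσ.trans_le hσi) ((norm_columnResidual_le i).trans hφi)
      (sigmaMin_sq_mul_coherence_le hi hj hij hqi hqj)
      (sq_abs_inner_add_abs_inner_le (norm_columnDirection hqi) (norm_columnDirection hqj) ε)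
      hnoise
  rw [← sq_lt_sq₀ (norm_nonneg _) (norm_nonneg _), sq_norm_lsResidual_erase hi,
    sq_norm_lsResidual_erase hj, add_lt_add_iff_left,
    inner_columnDirection_of_support_subset hxA hi, inner_columnDirection_of_support_subset hxA hj,
    hxi, zero_mul, zero_add, sq_lt_sq]
  calc |⟪ε, columnDirection φ A i⟫|
      < |x j * ‖columnResidual φ A j‖| - |⟪ε, columnDirection φ A j⟫| := by
        rw [abs_mul, abs_norm]; linarith
    _ ≤ |x j * ‖columnResidual φ A j‖ + ⟪ε, columnDirection φ A j⟫| := by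
        simpa using abs_sub_abs_le_abs_sub (x j * ‖columnResidual φ A j‖)
          (-⟪ε, columnDirection φ A j⟫)

end ColumnResidual

theorem backward_regression_deletion_invariant_general {n m : ℕ}
    (φ : Fin m → EuclideanSpace ℝ (Fin n)) (hunit : ∀ j, ‖φ j‖ = 1)
    (x : Fin m → ℝ) (S : Finset (Fin m)) (hsupp : ∀ i, x i ≠ 0 ↔ i ∈ S)
    (hSne : S.Nonempty)
    (ε : EuclideanSpace ℝ (Fin n)) (y : EuclideanSpace ℝ (Fin n))
    (hy : y = (∑ j, x j • φ j) + ε)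
    (A : Finset (Fin m)) (hSA : S ⊂ A)
    (hnoise : sigmaMin (fun i : {i // i ∈ A} => φ i.val) /
          Real.sqrt (2 * (2 - sigmaMin (fun i : {i // i ∈ A} => φ i.val) ^ 2)) *
        (S.inf' hSne fun i => |x i|) > ‖ε‖) :
    (∃ i ∈ A, i ∉ S ∧ ∀ j ∈ S, ‖lsResidual φ y (A.erase i)‖ < ‖lsResidual φ y (A.erase j)‖) ∧
    (∀ i ∈ A, (∀ j ∈ A, ‖lsResidual φ y (A.erase i)‖ ≤ ‖lsResidual φ y (A.erase j)‖) →
      i ∉ S) := by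
  set X := S.inf' hSne fun i => |x i|
  have hX : 0 < X := (Finset.lt_inf'_iff _).2 fun i hi => abs_pos.2 ((hsupp i).2 hi)
  obtain ⟨hσ, hnoise⟩ := pos_and_sq_mul_lt_of_lt_div_sqrt hX (norm_nonneg ε) hnoise
  have hx0 : ∀ l ∉ S, x l = 0 := fun l hl => not_not.1 ((hsupp l).not.2 hl)
  have hdeletes : ∀ i ∈ A, i ∉ S → ∀ j ∈ S,
      ‖lsResidual φ y (A.erase i)‖ < ‖lsResidual φ y (A.erase j)‖ := by
    intro i hi hiS j hjS
    have hXj : X ^ 2 ≤ x j ^ 2 := by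
      rw [← sq_abs (x j)]
      exact pow_le_pow_left₀ hX.le (Finset.inf'_le _ hjS) 2
    rw [hy]
    exact norm_lsResidual_erase_lt (fun l hl => hx0 l fun h => hl (hSA.subset h)) hi
      (hSA.subset hjS) (fun h => hiS (h ▸ hjS)) (hx0 i hiS) (hunit i).le (hunit j).le hσ
      (hnoise.trans_le (by gcongr))
  obtain ⟨i₀, hi₀, hi₀S⟩ := Finset.exists_of_ssubset hSA
  exact ⟨⟨i₀, hi₀, hi₀S, hdeletes i₀ hi₀ hi₀S⟩,
    fun i hi hmin hiS => (hdeletes i₀ hi₀ hi₀S i hiS).not_ge (hmin i₀ hi₀)⟩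

/-- single-step deletion-correctness invariant behind Theorem 4 of the
paper: if `S ⊊ A`, the submatrix `Φ_A` has full column rank, and
`(σ_min(Φ_A)/√(2(2−σ_min(Φ_A)²))) min_{i∈S}|x_i| > ‖ε‖₂`, then
`min_{i∈A∖S} ‖r_{A∖{i}}‖ < min_{i∈S} ‖r_{A∖{i}}‖`; in particular every minimizer of
`‖r_{A∖{i}}‖` over `i ∈ A` lies in `A∖S`. -/
theorem backward_regression_deletion_invariant {n m : ℕ}
    (φ : Fin m → EuclideanSpace ℝ (Fin n)) (hunit : ∀ j, ‖φ j‖ = 1)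
    (x : Fin m → ℝ) (S : Finset (Fin m)) (hsupp : ∀ i, x i ≠ 0 ↔ i ∈ S)
    (hSne : S.Nonempty)
    (ε : EuclideanSpace ℝ (Fin n)) (y : EuclideanSpace ℝ (Fin n))
    (hy : y = (∑ j, x j • φ j) + ε)
    (A : Finset (Fin m)) (hSA : S ⊂ A)
    (hrank : LinearIndependent ℝ (fun i : {i // i ∈ A} => φ i.val))
    (hnoise : sigmaMin (fun i : {i // i ∈ A} => φ i.val) /
          Real.sqrt (2 * (2 - sigmaMin (fun i : {i // i ∈ A} => φ i.val) ^ 2)) *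
        (S.inf' hSne fun i => |x i|) > ‖ε‖) :
    (∃ i ∈ A, i ∉ S ∧ ∀ j ∈ S, ‖lsResidual φ y (A.erase i)‖ < ‖lsResidual φ y (A.erase j)‖) ∧
    (∀ i ∈ A, (∀ j ∈ A, ‖lsResidual φ y (A.erase i)‖ ≤ ‖lsResidual φ y (A.erase j)‖) →
      i ∉ S) :=
  backward_regression_deletion_invariant_general φ hunit x S hsupp hSne ε y hy A hSA hnoise
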